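/- The commutator of the qubit SLD L = ih(|ψ₁⟩⟨ψ₂| − |ψ₂⟩⟨ψ₁|) with σ₋ satisfies Tr(ρ [L,σ₋]†[L,σ₋]) = h², for the state ρ = ½(I + h cosφ σ_x − h sinφ σ_y + (h²−1)σ_z) with eigendecomposition ρ = Σ p_i |ψ_i⟩⟨ψ_i| and L the SLD of this family in φ. -/

import Mathlib

/-! For a 2×2 matrix `A` with nonzero trace and determinant, `X ↦ XA + AX` is injective: if `X`
anticommutes with `A` it commutes with `A² = (tr A) A − (det A) 1`, hence with `A`, so `AX = 0`.
This makes the SLD unique. The Bloch vector of `ρ` has constant length, so its `φ`-derivative is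
orthogonal to it, `{∂_φ ρ, ρ} = ∂_φ ρ`, and the SLD is `L = 2 ∂_φ ρ`. Then `[L, σ₋]` is diagonal
with entries `± i h e^{iφ}`, so `[L, σ₋]† [L, σ₋] = h² 1` and the trace is `h² Tr ρ = h²`. -/

open Matrix

noncomputable section

def σplus : Matrix (Fin 2) (Fin 2) ℂ := !![0, 1; 0, 0]
def σminus : Matrix (Fin 2) (Fin 2) ℂ := !![0, 0; 1, 0]

/-- The Bloch state `ρ = ½(I + h cosφ σ_x − h sinφ σ_y + (h²−1)σ_z)` in matrix
entries, in the basis `|e⟩ = (1,0)`, `|g⟩ = (0,1)`. -/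
def ρB (h φ : ℝ) : Matrix (Fin 2) (Fin 2) ℂ :=
  (1 / 2 : ℂ) • !![((h : ℂ)) ^ 2, (h : ℂ) * Complex.exp (φ * Complex.I);
                   (h : ℂ) * Complex.exp (-(φ * Complex.I)), 2 - ((h : ℂ)) ^ 2]

/-- The `φ`-derivative of `ρB`. -/
def ρBφ (h φ : ℝ) : Matrix (Fin 2) (Fin 2) ℂ :=
  (1 / 2 : ℂ) • !![0, Complex.I * ((h : ℂ) * Complex.exp (φ * Complex.I));
                   -(Complex.I * ((h : ℂ) * Complex.exp (-(φ * Complex.I)))), 0]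

theorem Matrix.sq_fin_two {R : Type*} [CommRing R] (A : Matrix (Fin 2) (Fin 2) R) :
    A ^ 2 = A.trace • A - A.det • 1 := by
  nontriviality R
  have hCH := A.aeval_self_charpoly
  simp only [charpoly_fin_two, map_add, map_sub, map_pow, Polynomial.aeval_X, map_mul,
    Polynomial.aeval_C, Algebra.algebraMap_eq_smul_one, smul_mul_assoc, Matrix.one_mul] at hCH
  rw [← sub_eq_zero, ← hCH]
  abel

theorem Matrix.mul_add_mul_injective_fin_two {K : Type*} [Field K] [NeZero (2 : K)]
    {A : Matrix (Fin 2) (Fin 2) K} (htr : A.trace ≠ 0) (hdet : A.det ≠ 0) :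
    Function.Injective fun X => X * A + A * X := by
  intro X Y hXY
  have hanti : A * (X - Y) = -((X - Y) * A) := by
    refine eq_neg_of_add_eq_zero_right ?_
    simp only [Matrix.sub_mul, Matrix.mul_sub, sub_add_sub_comm, hXY, sub_self]
  rw [← sub_eq_zero]
  generalize X - Y = Z at hanti ⊢
  have hsq : A ^ 2 * Z = Z * A ^ 2 := calc
    A ^ 2 * Z = A * (A * Z) := by rw [sq, Matrix.mul_assoc]
    _ = -((A * Z) * A) := by rw [hanti, Matrix.mul_neg, ← Matrix.mul_assoc, hanti]
    _ = Z * A ^ 2 := by rw [hanti, Matrix.neg_mul, neg_neg, sq, Matrix.mul_assoc]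
  have hcomm : A * Z = Z * A := by
    rw [sq_fin_two, Matrix.sub_mul, Matrix.mul_sub, smul_mul_assoc, mul_smul_comm, smul_mul_assoc,
      mul_smul_comm, Matrix.one_mul, Matrix.mul_one] at hsq
    exact smul_right_injective _ htr (sub_left_injective hsq)
  have hAZ : A * Z = 0 := by
    have h2AZ : (2 : K) • (A * Z) = 0 := by
      rw [two_smul]
      nth_rewrite 1 [hanti]
      rw [hcomm, neg_add_cancel]
    exact (smul_eq_zero.1 h2AZ).resolve_left two_ne_zero
  exact ((isUnit_iff_isUnit_det A).2 hdet.isUnit).mul_right_injective (hAZ.trans (mul_zero A).symm)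

section

variable (h φ : ℝ)

theorem exp_mul_I_mul_exp_neg :
    Complex.exp (φ * Complex.I) * Complex.exp (-(φ * Complex.I)) = 1 := by
  rw [← Complex.exp_add, add_neg_cancel, Complex.exp_zero]

theorem conj_exp_mul_I :
    starRingEnd ℂ (Complex.exp (φ * Complex.I)) = Complex.exp (-(φ * Complex.I)) := by
  rw [← Complex.exp_conj, map_mul, Complex.conj_ofReal, Complex.conj_I, mul_neg]

theorem ρB_trace : (ρB h φ).trace = 1 := by
  simp only [ρB, trace_smul, trace_fin_two_of]
  ring

theorem ρB_det : (ρB h φ).det = ((h ^ 2 * (1 - h ^ 2) / 4 : ℝ) : ℂ) := by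
  simp only [ρB, det_smul, det_fin_two_of, Fintype.card_fin]
  push_cast
  linear_combination (-(h : ℂ) ^ 2 / 4) * exp_mul_I_mul_exp_neg φ

theorem ρB_det_ne_zero (h0 : 0 < h) (h1 : h < 1) : (ρB h φ).det ≠ 0 := by
  have : 0 < 1 - h ^ 2 := by nlinarith
  rw [ρB_det, Complex.ofReal_ne_zero]
  positivity

def ρBsld : Matrix (Fin 2) (Fin 2) ℂ := (2 : ℂ) • ρBφ h φ

theorem ρBφ_eq_sld : ρBφ h φ = (1 / 2 : ℂ) • (ρBsld h φ * ρB h φ + ρB h φ * ρBsld h φ) := by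
  ext i j
  fin_cases i <;> fin_cases j <;> simp [ρBsld, ρB, ρBφ] <;> ring

theorem ρBsld_commutator_σminus_conjTranspose_mul_self :
    (ρBsld h φ * σminus - σminus * ρBsld h φ)ᴴ * (ρBsld h φ * σminus - σminus * ρBsld h φ)
      = ((h ^ 2 : ℝ) : ℂ) • 1 := by
  ext i j
  fin_cases i <;> fin_cases j <;>
    simp [ρBsld, ρBφ, σminus, Matrix.mul_apply, Fin.sum_univ_two, conj_exp_mul_I] <;>
    linear_combination (-Complex.I ^ 2 * (h : ℂ) ^ 2) * exp_mul_I_mul_exp_neg φ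
      - (h : ℂ) ^ 2 * Complex.I_sq

end

theorem qubit_channel_J_eq_h_sq_general (h φ : ℝ) (h0 : 0 < h) (h1 : h < 1)
    (L : Matrix (Fin 2) (Fin 2) ℂ)
    (hSLD : ρBφ h φ = (1 / 2 : ℂ) • (L * ρB h φ + ρB h φ * L)) :
    (ρB h φ * (L * σminus - σminus * L)ᴴ * (L * σminus - σminus * L)).trace
      = ((h ^ 2 : ℝ) : ℂ) := by
  have hL : L = ρBsld h φ :=
    mul_add_mul_injective_fin_two (by rw [ρB_trace]; exact one_ne_zero) (ρB_det_ne_zero h φ h0 h1)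
      (smul_right_injective _ (by norm_num) (hSLD.symm.trans (ρBφ_eq_sld h φ)))
  rw [hL, Matrix.mul_assoc, ρBsld_commutator_σminus_conjTranspose_mul_self, mul_smul_comm,
    Matrix.mul_one, trace_smul, ρB_trace, smul_eq_mul, mul_one]

/-- For the SLD `L` of the qubit family `ρB` (in the parameter `φ`), the channel
quantity satisfies `Tr(ρ [L,σ₋]† [L,σ₋]) = h²`. -/
theorem qubit_channel_J_eq_h_sq (h φ : ℝ) (h0 : 0 < h) (h1 : h < 1)
    (L : Matrix (Fin 2) (Fin 2) ℂ) (hL : L.IsHermitian)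
    (hSLD : ρBφ h φ = (1 / 2 : ℂ) • (L * ρB h φ + ρB h φ * L)) :
    (ρB h φ * (L * σminus - σminus * L)ᴴ * (L * σminus - σminus * L)).trace
      = ((h ^ 2 : ℝ) : ℂ) :=
  qubit_channel_J_eq_h_sq_general h φ h0 h1 L hSLD

end
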